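/- A nondegenerate set Γ of 2n+2 distinct points in P^n is self-associated if and only if every subset of 2n+1 points of Γ imposes the same number of conditions on quadrics as Γ. -/

import Mathlib

open MvPolynomial

/-- The space of quadrics vanishing at the points `{p i : i ∈ s}`. -/
noncomputable def quadricsThrough {k : Type*} [Field k] {n N : ℕ}
    (p : Fin N → (Fin (n + 1) → k)) (s : Finset (Fin N)) :
    Submodule k (MvPolynomial (Fin (n + 1)) k) :=
  MvPolynomial.homogeneousSubmodule (Fin (n + 1)) k 2 ⊓
    ⨅ i ∈ s, LinearMap.ker (MvPolynomial.aeval (R := k) (p i)).toLinearMap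

/-- The number of conditions imposed on quadrics by the points `{p i : i ∈ s}`. -/
noncomputable def condsOnQuadrics {k : Type*} [Field k] {n N : ℕ}
    (p : Fin N → (Fin (n + 1) → k)) (s : Finset (Fin N)) : ℕ :=
  Module.finrank k (MvPolynomial.homogeneousSubmodule (Fin (n + 1)) k 2) -
    Module.finrank k (quadricsThrough p s)

/-- `Γ = {p i}` is self-associated: it splits into two sets of `n+1` points each of which
is an orthogonal basis (an apolar simplex) for a common nondegenerate symmetric bilinear
form `Q` on `k^{n+1}`. -/
def SelfAssociated {k : Type*} [Field k] {n : ℕ}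
    (p : Fin (2 * n + 2) → (Fin (n + 1) → k)) : Prop :=
  ∃ Q : LinearMap.BilinForm k (Fin (n + 1) → k), Q.IsSymm ∧ Q.Nondegenerate ∧
    ∃ e : (Fin (n + 1) ⊕ Fin (n + 1)) ≃ Fin (2 * n + 2),
      LinearIndependent k (p ∘ e ∘ Sum.inl) ∧ LinearIndependent k (p ∘ e ∘ Sum.inr) ∧
      (∀ i j, i ≠ j → Q (p (e (Sum.inl i))) (p (e (Sum.inl j))) = 0) ∧
      (∀ i j, i ≠ j → Q (p (e (Sum.inr i))) (p (e (Sum.inr j))) = 0)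

lemma degree_two_decomp {σ : Type*} (d : σ →₀ ℕ) (hd : Finsupp.degree d = 2) :
    ∃ a b, d = Finsupp.single a 1 + Finsupp.single b 1 := by
  classical
  have hc : Multiset.card (Finsupp.toMultiset d) = 2 := by
    rw [Finsupp.card_toMultiset]
    simpa [Finsupp.degree_apply, Finsupp.sum] using hd
  obtain ⟨a, b, hab⟩ := Multiset.card_eq_two.1 hc
  refine ⟨a, b, ?_⟩
  have h1 : d = (Finsupp.toMultiset d).toFinsupp := (Finsupp.toMultiset_toFinsupp d).symm
  rw [h1, hab]
  ext x
  simp [Multiset.toFinsupp_apply, Finsupp.single_apply]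
  simp only [Multiset.insert_eq_cons, Multiset.count_cons, Multiset.count_singleton]
  by_cases hxa : a = x <;> by_cases hxb : b = x <;> simp [hxa, hxb] <;>
    first
      | exact fun h => hxb h.symm
      | exact fun h => hxa h.symm
      | exact ⟨fun h => hxb h.symm, fun h => hxa h.symm⟩

lemma X_mul_X_mem_homog {k σ : Type*} [Field k] (a b : σ) :
    (X a * X b : MvPolynomial σ k) ∈ homogeneousSubmodule σ k 2 := by
  rw [mem_homogeneousSubmodule]
  exact (isHomogeneous_X k a).mul (isHomogeneous_X k b)

lemma homog2_eq_span (k σ : Type*) [Field k] :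
    homogeneousSubmodule σ k 2 =
      Submodule.span k (Set.range fun ab : σ × σ => (X ab.1 * X ab.2 : MvPolynomial σ k)) := by
  classical
  refine le_antisymm ?_ (Submodule.span_le.2 ?_)
  · intro q hq
    rw [mem_homogeneousSubmodule] at hq
    rw [q.as_sum]
    apply Submodule.sum_mem
    intro d hd
    have hdeg : Finsupp.degree d = 2 := by
      have := hq (MvPolynomial.mem_support_iff.1 hd)
      rw [Finsupp.degree_eq_weight_one]
      exact this
    obtain ⟨a, b, rfl⟩ := degree_two_decomp d hdeg
    have hXX : (X a * X b : MvPolynomial σ k) =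
        monomial (Finsupp.single a 1 + Finsupp.single b 1) 1 := by
      rw [X, X, monomial_mul, one_mul]
    have : (monomial (Finsupp.single a 1 + Finsupp.single b 1)
        (coeff (Finsupp.single a 1 + Finsupp.single b 1) q)) =
        (coeff (Finsupp.single a 1 + Finsupp.single b 1) q) • (X a * X b) := by
      rw [hXX, smul_monomial, smul_eq_mul, mul_one]
    rw [this]
    exact Submodule.smul_mem _ _ (Submodule.subset_span ⟨(a, b), rfl⟩)
  · rintro x ⟨⟨a, b⟩, rfl⟩
    exact X_mul_X_mem_homog a b

lemma homog2_fd (k σ : Type*) [Field k] [Finite σ] :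
    FiniteDimensional k (homogeneousSubmodule σ k 2) := by
  have : Finite (σ × σ) := inferInstance
  rw [homog2_eq_span k σ]
  exact FiniteDimensional.span_of_finite k (Set.finite_range _)

lemma rel_eval {k : Type*} [Field k] {m N : ℕ} (p : Fin N → Fin m → k) (lam : Fin N → k)
    (hrel : ∀ a b, ∑ j, lam j * (p j a * p j b) = 0) :
    ∀ q ∈ homogeneousSubmodule (Fin m) k 2, ∑ j, lam j * (aeval (p j) q) = 0 := by
  intro q hq
  let L : MvPolynomial (Fin m) k →ₗ[k] k :=
    ∑ j, lam j • (MvPolynomial.aeval (R := k) (p j)).toLinearMap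
  have hL : ∀ r, L r = ∑ j, lam j * (aeval (p j) r) := by
    intro r
    simp [L, LinearMap.sum_apply, LinearMap.smul_apply, smul_eq_mul]
  have hker : homogeneousSubmodule (Fin m) k 2 ≤ LinearMap.ker L := by
    rw [homog2_eq_span k (Fin m), Submodule.span_le]
    rintro x ⟨⟨a, b⟩, rfl⟩
    rw [SetLike.mem_coe, LinearMap.mem_ker, hL]
    simpa [mul_assoc] using hrel a b
  rw [← hL]
  exact LinearMap.mem_ker.1 (hker hq)

section MatrixHelpers

open Matrix

variable {k : Type*} [Field k] {m : Type*} [Fintype m] [DecidableEq m]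

lemma triple_entries (M : Matrix m m k) (d : m → k) (x y : m) :
    (M * Matrix.diagonal d * Mᵀ) x y = ∑ i, d i * (M x i * M y i) := by
  simp only [Matrix.mul_apply, Matrix.transpose_apply, Matrix.diagonal_apply, mul_ite,
    ite_mul, zero_mul, mul_zero, Finset.sum_ite_eq', Finset.mem_univ, if_true]
  exact Finset.sum_congr rfl fun i _ => by ring

lemma diag_det_isUnit (d : m → k) (hd : ∀ i, d i ≠ 0) :
    IsUnit (Matrix.diagonal d).det := by
  rw [Matrix.det_diagonal]
  exact isUnit_iff_ne_zero.2 (Finset.prod_ne_zero_iff.2 fun i _ => hd i)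

lemma ortho_core (M : Matrix m m k) (d : m → k) (hM : IsUnit M.det) (hd : ∀ i, d i ≠ 0)
    {i j : m} (hij : i ≠ j) :
    Matrix.toBilin' (M * Matrix.diagonal d * Mᵀ)⁻¹ (fun x => M x i) (fun x => M x j) = 0 := by
  have hD : IsUnit (Matrix.diagonal d).det := diag_det_isUnit d hd
  have hMt : IsUnit (Mᵀ : Matrix m m k).det := by rwa [Matrix.det_transpose]
  have hTinv : (M * Matrix.diagonal d * Mᵀ)⁻¹ * M =
      (Mᵀ : Matrix m m k)⁻¹ * (Matrix.diagonal d)⁻¹ := by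
    rw [Matrix.mul_inv_rev, Matrix.mul_inv_rev, Matrix.mul_assoc, Matrix.mul_assoc,
      Matrix.nonsing_inv_mul _ hM, Matrix.mul_one]
  have colM : ∀ l, (fun x => M x l) = M *ᵥ Pi.single l 1 := by
    intro l; funext x; simp [Matrix.mulVec_single]
  rw [Matrix.toBilin'_apply', colM, colM, Matrix.mulVec_mulVec, hTinv,
    ← Matrix.vecMul_transpose, Matrix.dotProduct_mulVec, Matrix.vecMul_vecMul,
    ← Matrix.mul_assoc, Matrix.mul_nonsing_inv _ hMt, Matrix.one_mul,
    Matrix.inv_diagonal, Matrix.single_vecMul_diagonal]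
  simp [Pi.single_apply, hij, dotProduct_single]

end MatrixHelpers

section Main

open Matrix

variable {k : Type*} [Field k]

lemma indep_isUnit {m : ℕ} {v : Fin m → Fin m → k} (hv : LinearIndependent k v) :
    IsUnit ((Matrix.of v)ᵀ).det := by
  rw [Matrix.det_transpose, ← Matrix.isUnit_iff_isUnit_det]
  exact Matrix.linearIndependent_rows_iff_isUnit.1 hv

lemma isUnit_indep {m : ℕ} {v : Fin m → Fin m → k} (hv : IsUnit ((Matrix.of v)ᵀ).det) :
    LinearIndependent k v := by
  rw [Matrix.det_transpose, ← Matrix.isUnit_iff_isUnit_det] at hv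
  exact Matrix.linearIndependent_rows_iff_isUnit.2 hv

lemma conj_entries {m : Type*} [Fintype m] [DecidableEq m] (G M : Matrix m m k) (i j : m) :
    (Mᵀ * G * M) i j = (fun x => M x i) ⬝ᵥ G *ᵥ (fun x => M x j) := by
  rw [Matrix.mul_assoc, Matrix.mul_apply]
  simp only [Matrix.transpose_apply, Matrix.mul_apply, dotProduct, Matrix.mulVec]

lemma diag_inv {m : Type*} [Fintype m] [DecidableEq m] (d : m → k) (hd : ∀ i, d i ≠ 0) :
    (Matrix.diagonal d)⁻¹ = Matrix.diagonal (fun i => (d i)⁻¹) := by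
  apply Matrix.inv_eq_right_inv
  rw [Matrix.diagonal_mul_diagonal]
  ext i j
  by_cases h : i = j
  · subst h; simp [mul_inv_cancel₀ (hd i)]
  · simp [Matrix.diagonal_apply_ne _ h, Matrix.one_apply_ne h]

lemma gram_diag_inv {m : Type*} [Fintype m] [DecidableEq m]
    (G M : Matrix m m k) (d : m → k) (hM : IsUnit M.det)
    (h : Mᵀ * G * M = Matrix.diagonal d) :
    M * (Matrix.diagonal d)⁻¹ * Mᵀ = G⁻¹ := by
  have hMt : IsUnit (Mᵀ : Matrix m m k).det := by rwa [Matrix.det_transpose]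
  have hGeq : G = Mᵀ⁻¹ * Matrix.diagonal d * M⁻¹ := by
    rw [← h]
    calc G = (Mᵀ⁻¹ * Mᵀ) * G * (M * M⁻¹) := by
          rw [Matrix.nonsing_inv_mul _ hMt, Matrix.mul_nonsing_inv _ hM, Matrix.one_mul,
            Matrix.mul_one]
      _ = Mᵀ⁻¹ * (Mᵀ * G * M) * M⁻¹ := by simp only [Matrix.mul_assoc]
  have hinv : (Mᵀ⁻¹ * Matrix.diagonal d * M⁻¹)⁻¹ =
      M * ((Matrix.diagonal d)⁻¹ * Mᵀ) := by
    rw [Matrix.mul_inv_rev, Matrix.mul_inv_rev, Matrix.nonsing_inv_nonsing_inv _ hM,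
      Matrix.nonsing_inv_nonsing_inv _ hMt]
  rw [hGeq, hinv, ← Matrix.mul_assoc]

lemma selfAssociated_rel {n : ℕ} (p : Fin (2 * n + 2) → (Fin (n + 1) → k))
    (hSA : SelfAssociated p) :
    ∃ lam : Fin (2 * n + 2) → k, (∀ j, lam j ≠ 0) ∧
      ∀ a b, ∑ t, lam t * (p t a * p t b) = 0 := by
  classical
  obtain ⟨Q, hsymm, hnd, e, hA, hB, hoA, hoB⟩ := hSA
  set G := LinearMap.BilinForm.toMatrix' Q with hGdef
  have hQ : ∀ v w, Q v w = v ⬝ᵥ G *ᵥ w := by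
    intro v w
    rw [← Matrix.toBilin'_apply', hGdef, Matrix.toBilin'_toMatrix']
  have hGnd : G.Nondegenerate := by
    rw [hGdef, ← Matrix.nondegenerate_toBilin'_iff, Matrix.toBilin'_toMatrix']
    exact hnd
  have hG : IsUnit G.det := isUnit_iff_ne_zero.2 hGnd.det_ne_zero
  set M := (Matrix.of (p ∘ e ∘ Sum.inl))ᵀ with hMdef
  set N := (Matrix.of (p ∘ e ∘ Sum.inr))ᵀ with hNdef
  have hM : IsUnit M.det := indep_isUnit hA
  have hN : IsUnit N.det := indep_isUnit hB
  have hMt : IsUnit (Mᵀ : Matrix (Fin (n+1)) (Fin (n+1)) k).det := by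
    rwa [Matrix.det_transpose]
  have hNt : IsUnit (Nᵀ : Matrix (Fin (n+1)) (Fin (n+1)) k).det := by
    rwa [Matrix.det_transpose]
  set dA : Fin (n + 1) → k := fun i => Q (p (e (Sum.inl i))) (p (e (Sum.inl i))) with hdAdef
  set dB : Fin (n + 1) → k := fun i => Q (p (e (Sum.inr i))) (p (e (Sum.inr i))) with hdBdef
  have colM : ∀ i, (fun x => M x i) = p (e (Sum.inl i)) := fun i => rfl
  have colN : ∀ i, (fun x => N x i) = p (e (Sum.inr i)) := fun i => rfl
  have hMGM : Mᵀ * G * M = Matrix.diagonal dA := by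
    ext i j
    rw [conj_entries, colM, colM, ← hQ]
    by_cases hij : i = j
    · subst hij; rw [Matrix.diagonal_apply_eq]
    · rw [Matrix.diagonal_apply_ne _ hij]; exact hoA i j hij
  have hNGN : Nᵀ * G * N = Matrix.diagonal dB := by
    ext i j
    rw [conj_entries, colN, colN, ← hQ]
    by_cases hij : i = j
    · subst hij; rw [Matrix.diagonal_apply_eq]
    · rw [Matrix.diagonal_apply_ne _ hij]; exact hoB i j hij
  have hDA : IsUnit (Matrix.diagonal dA).det := by
    rw [← hMGM, Matrix.det_mul, Matrix.det_mul]
    exact (hMt.mul hG).mul hM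
  have hDB : IsUnit (Matrix.diagonal dB).det := by
    rw [← hNGN, Matrix.det_mul, Matrix.det_mul]
    exact (hNt.mul hG).mul hN
  have hdA : ∀ i, dA i ≠ 0 := by
    rw [Matrix.det_diagonal] at hDA
    exact fun i => Finset.prod_ne_zero_iff.1 (isUnit_iff_ne_zero.1 hDA) i (Finset.mem_univ i)
  have hdB : ∀ i, dB i ≠ 0 := by
    rw [Matrix.det_diagonal] at hDB
    exact fun i => Finset.prod_ne_zero_iff.1 (isUnit_iff_ne_zero.1 hDB) i (Finset.mem_univ i)
  have hGA : M * (Matrix.diagonal dA)⁻¹ * Mᵀ = G⁻¹ := gram_diag_inv G M dA hM hMGM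
  have hGB : N * (Matrix.diagonal dB)⁻¹ * Nᵀ = G⁻¹ := gram_diag_inv G N dB hN hNGN
  refine ⟨fun t => Sum.elim (fun i => (dA i)⁻¹) (fun j => -(dB j)⁻¹) (e.symm t), ?_, ?_⟩
  · intro t
    rcases h : e.symm t with i | j
    · simp only [h, Sum.elim_inl]; exact inv_ne_zero (hdA i)
    · simp only [h, Sum.elim_inr]; exact neg_ne_zero.2 (inv_ne_zero (hdB j))
  · intro a b
    rw [← Equiv.sum_comp e
      (fun t => Sum.elim (fun i => (dA i)⁻¹) (fun j => -(dB j)⁻¹) (e.symm t) * (p t a * p t b)),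
      Fintype.sum_sum_type]
    simp only [Equiv.symm_apply_apply, Sum.elim_inl, Sum.elim_inr]
    have eA : ∑ i, (dA i)⁻¹ * (p (e (Sum.inl i)) a * p (e (Sum.inl i)) b) =
        (M * (Matrix.diagonal dA)⁻¹ * Mᵀ) a b := by
      rw [diag_inv dA hdA, triple_entries]
      rfl
    have eB : ∑ j, -(dB j)⁻¹ * (p (e (Sum.inr j)) a * p (e (Sum.inr j)) b) =
        -((N * (Matrix.diagonal dB)⁻¹ * Nᵀ) a b) := by
      rw [diag_inv dB hdB, triple_entries, ← Finset.sum_neg_distrib]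
      exact Finset.sum_congr rfl fun j _ => neg_mul _ _
    rw [eA, eB, hGA, hGB, add_neg_cancel]


lemma exists_good_equiv {n : ℕ} (p : Fin (2 * n + 2) → (Fin (n + 1) → k))
    (hinj : Function.Injective p)
    (hspan : Submodule.span k (Set.range p) = ⊤) :
    ∃ e : (Fin (n + 1) ⊕ Fin (n + 1)) ≃ Fin (2 * n + 2),
      LinearIndependent k (p ∘ e ∘ Sum.inl) := by
  classical
  obtain ⟨t, hts, htspan, hti⟩ := exists_linearIndependent k (Set.range p)
  have htfin : t.Finite := (Set.finite_range p).subset hts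
  haveI := htfin.fintype
  have htop : Submodule.span k t = ⊤ := by rw [htspan, hspan]
  have hcard : t.toFinset.card = n + 1 := by
    have h1 := finrank_span_set_eq_card hti
    rw [htop, finrank_top, Module.finrank_fin_fun] at h1
    omega
  set A : Finset (Fin (2 * n + 2)) := Finset.univ.filter (fun j => p j ∈ t) with hA
  have himg : A.image p = t.toFinset := by
    ext x
    simp only [hA, Finset.mem_image, Finset.mem_filter, Finset.mem_univ, true_and,
      Set.mem_toFinset]
    constructor
    · rintro ⟨j, hj, rfl⟩; exact hj
    · intro hx; obtain ⟨j, rfl⟩ := hts hx; exact ⟨j, hx, rfl⟩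
  have hAcard : A.card = n + 1 := by
    rw [← Finset.card_image_of_injective A hinj, himg, hcard]
  have hAc : Aᶜ.card = n + 1 := by
    rw [Finset.card_compl, hAcard, Fintype.card_fin]; omega
  let e2' : ↥(Aᶜ) ≃ {x // ¬ x ∈ A} := Equiv.subtypeEquivRight (fun x => Finset.mem_compl)
  let e : (Fin (n + 1) ⊕ Fin (n + 1)) ≃ Fin (2 * n + 2) :=
    (Equiv.sumCongr (Finset.equivFinOfCardEq hAcard).symm
      ((Finset.equivFinOfCardEq hAc).symm.trans e2')).trans
      (Equiv.sumCompl (fun x => x ∈ A))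
  refine ⟨e, ?_⟩
  have hmem : ∀ i, p (e (Sum.inl i)) ∈ t := by
    intro i
    have h2 : (e (Sum.inl i)) ∈ A := by
      have := ((Finset.equivFinOfCardEq hAcard).symm i).2
      simpa [e, Equiv.sumCompl] using this
    rw [hA] at h2
    simpa using h2
  let g : Fin (n + 1) → t := fun i => ⟨p (e (Sum.inl i)), hmem i⟩
  have hginj : Function.Injective g := by
    intro i i' h
    have h2 : p (e (Sum.inl i)) = p (e (Sum.inl i')) := congrArg Subtype.val h
    exact Sum.inl_injective (e.injective (hinj h2))
  have hfac : (p ∘ e ∘ Sum.inl) = (fun x : t => (x : Fin (n + 1) → k)) ∘ g := rfl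
  rw [hfac]
  exact hti.comp g hginj

lemma rel_SA {n : ℕ} (p : Fin (2 * n + 2) → (Fin (n + 1) → k)) (lam : Fin (2 * n + 2) → k)
    (hlam : ∀ t, lam t ≠ 0)
    (hrel : ∀ a b, ∑ t, lam t * (p t a * p t b) = 0)
    (hinj : Function.Injective p)
    (hspan : Submodule.span k (Set.range p) = ⊤) : SelfAssociated p := by
  classical
  obtain ⟨e, hA⟩ := exists_good_equiv p hinj hspan
  set M := (Matrix.of (p ∘ e ∘ Sum.inl))ᵀ with hMdef
  set N := (Matrix.of (p ∘ e ∘ Sum.inr))ᵀ with hNdef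
  set dA : Fin (n + 1) → k := fun i => lam (e (Sum.inl i)) with hdAdef
  set dB : Fin (n + 1) → k := fun j => -lam (e (Sum.inr j)) with hdBdef
  have hdA : ∀ i, dA i ≠ 0 := fun i => hlam _
  have hdB : ∀ j, dB j ≠ 0 := fun j => neg_ne_zero.2 (hlam _)
  have hM : IsUnit M.det := indep_isUnit hA
  have hMt : IsUnit (Mᵀ : Matrix (Fin (n + 1)) (Fin (n + 1)) k).det := by
    rwa [Matrix.det_transpose]
  have key : M * Matrix.diagonal dA * Mᵀ = N * Matrix.diagonal dB * Nᵀ := by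
    ext a b
    rw [triple_entries, triple_entries]
    have h0 := hrel a b
    rw [← Equiv.sum_comp e (fun t => lam t * (p t a * p t b)), Fintype.sum_sum_type] at h0
    have hB0 : ∑ j, dB j * (N a j * N b j) =
        -∑ j, lam (e (Sum.inr j)) * (p (e (Sum.inr j)) a * p (e (Sum.inr j)) b) := by
      rw [← Finset.sum_neg_distrib]
      exact Finset.sum_congr rfl fun j _ => neg_mul _ _
    rw [hB0]
    exact eq_neg_of_add_eq_zero_left h0
  have hNunit : IsUnit N.det := by
    have h1 : IsUnit (N * Matrix.diagonal dB * Nᵀ).det := by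
      rw [← key, Matrix.det_mul, Matrix.det_mul]
      exact (hM.mul (diag_det_isUnit dA hdA)).mul hMt
    rw [Matrix.det_mul, Matrix.det_mul] at h1
    exact isUnit_of_mul_isUnit_left (isUnit_of_mul_isUnit_left h1)
  have hB : LinearIndependent k (p ∘ e ∘ Sum.inr) := isUnit_indep hNunit
  set T := M * Matrix.diagonal dA * Mᵀ with hT
  have hTdet : IsUnit T.det := by
    rw [hT, Matrix.det_mul, Matrix.det_mul]
    exact (hM.mul (diag_det_isUnit dA hdA)).mul hMt
  have hTsymm : Tᵀ = T := by
    rw [hT, Matrix.transpose_mul, Matrix.transpose_mul, Matrix.transpose_transpose,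
      Matrix.diagonal_transpose, Matrix.mul_assoc]
  have hTinvsymm : (T⁻¹)ᵀ = T⁻¹ := by rw [Matrix.transpose_nonsing_inv, hTsymm]
  refine ⟨Matrix.toBilin' T⁻¹, ?_, ?_, e, hA, hB, ?_, ?_⟩
  · refine ⟨fun v w => ?_⟩
    rw [Matrix.toBilin'_apply', Matrix.toBilin'_apply', Matrix.dotProduct_mulVec,
      ← hTinvsymm, Matrix.vecMul_transpose, dotProduct_comm, hTinvsymm]
  · rw [Matrix.nondegenerate_toBilin'_iff]
    exact Matrix.Nondegenerate.of_det_ne_zero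
      (isUnit_iff_ne_zero.1 (Matrix.isUnit_nonsing_inv_det T hTdet))
  · intro i j hij
    exact ortho_core M dA hM hdA hij
  · intro i j hij
    have hkey : T⁻¹ = (N * Matrix.diagonal dB * Nᵀ)⁻¹ := by rw [key]
    have h2 := ortho_core N dB hNunit hdB hij
    rw [← hkey] at h2
    exact h2


lemma mem_quadricsThrough {n N : ℕ} (p : Fin N → (Fin (n + 1) → k)) (s : Finset (Fin N))
    (q : MvPolynomial (Fin (n + 1)) k) :
    q ∈ quadricsThrough p s ↔
      q ∈ homogeneousSubmodule (Fin (n + 1)) k 2 ∧ ∀ i ∈ s, aeval (p i) q = 0 := by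
  simp [quadricsThrough, Submodule.mem_inf, Submodule.mem_iInf, LinearMap.mem_ker]

lemma rel_implies_rhs {n : ℕ} (p : Fin (2 * n + 2) → (Fin (n + 1) → k))
    (lam : Fin (2 * n + 2) → k) (hlam : ∀ t, lam t ≠ 0)
    (hrel : ∀ a b, ∑ t, lam t * (p t a * p t b) = 0) :
    ∀ s : Finset (Fin (2 * n + 2)), s.card = 2 * n + 1 →
      condsOnQuadrics p s = condsOnQuadrics p Finset.univ := by
  classical
  intro s hs
  have hsub : s ⊆ Finset.univ := Finset.subset_univ s
  have hcard : (Finset.univ \ s).card = 1 := by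
    rw [Finset.card_sdiff_of_subset hsub, Finset.card_univ, Fintype.card_fin, hs]
    omega
  obtain ⟨i0, hi0⟩ := Finset.card_eq_one.1 hcard
  have hmem : ∀ j, j ∈ s ↔ j ≠ i0 := by
    intro j
    constructor
    · intro hj hji
      subst hji
      have : j ∈ Finset.univ \ s := hi0 ▸ Finset.mem_singleton_self j
      exact (Finset.mem_sdiff.1 this).2 hj
    · intro hj
      by_contra hns
      have : j ∈ Finset.univ \ s := Finset.mem_sdiff.2 ⟨Finset.mem_univ j, hns⟩
      rw [hi0, Finset.mem_singleton] at this
      exact hj this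
  suffices h : quadricsThrough p s = quadricsThrough p Finset.univ by
    unfold condsOnQuadrics
    rw [h]
  apply le_antisymm
  · intro q hq
    rw [mem_quadricsThrough] at hq ⊢
    obtain ⟨hq2, hqv⟩ := hq
    refine ⟨hq2, fun i _ => ?_⟩
    by_cases hi : i = i0
    · subst hi
      have h0 : ∑ t, lam t * (aeval (p t) q) = 0 :=
        rel_eval p lam hrel q hq2
      have h1 : ∀ j ∈ Finset.univ, j ≠ i → lam j * (aeval (p j) q) = 0 := by
        intro j _ hj
        rw [hqv j ((hmem j).2 hj), mul_zero]
      have h2 : lam i * (aeval (p i) q) = 0 := by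
        rw [← Finset.sum_eq_single i h1 (fun h => absurd (Finset.mem_univ i) h)]
        exact h0
      rcases mul_eq_zero.1 h2 with h | h
      · exact absurd h (hlam i)
      · exact h
    · exact hqv i ((hmem i).2 hi)
  · intro q hq
    rw [mem_quadricsThrough] at hq ⊢
    exact ⟨hq.1, fun i _ => hq.2 i (Finset.mem_univ i)⟩

lemma combine_nonzero {ι : Type*} [Fintype ι] [DecidableEq ι] [Nonempty ι] [Infinite k]
    {C : (ι → k) → Prop}
    (Cadd : ∀ a b (c : k), C a → C b → C (fun t => a t + c * b t))
    (g : ι → (ι → k)) (hg : ∀ i, g i i ≠ 0) (hC : ∀ i, C (g i)) :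
    ∃ lam : ι → k, (∀ t, lam t ≠ 0) ∧ C lam := by
  classical
  suffices h : ∀ s : Finset ι, ∃ lam, C lam ∧ ∀ t ∈ s, lam t ≠ 0 by
    obtain ⟨lam, h1, h2⟩ := h Finset.univ
    exact ⟨lam, fun t => h2 t (Finset.mem_univ t), h1⟩
  intro s
  induction s using Finset.induction with
  | empty => exact ⟨g (Classical.arbitrary ι), hC _, fun t ht => absurd ht (Finset.notMem_empty t)⟩
  | @insert i s' hi ih =>
    obtain ⟨lam, hC1, hne⟩ := ih
    by_cases h0 : lam i ≠ 0
    · exact ⟨lam, hC1, fun t ht => (Finset.mem_insert.1 ht).elim (fun h => h ▸ h0) (hne t)⟩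
    · set bad : Finset k := (insert i s').image (fun t => -(lam t) / g i t) with hbad
      obtain ⟨c, hc⟩ := Infinite.exists_notMem_finset bad
      refine ⟨fun t => lam t + c * g i t, Cadd _ _ _ hC1 (hC i), ?_⟩
      intro t ht hzero0
      have hzero : lam t + c * g i t = 0 := hzero0
      by_cases hgit : g i t = 0
      · rw [hgit, mul_zero, add_zero] at hzero
        rcases Finset.mem_insert.1 ht with rfl | hts
        · exact hg t hgit
        · exact hne t hts hzero
      · apply hc
        have hceq : c = -(lam t) / g i t := by
          rw [eq_div_iff hgit]
          linear_combination hzero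
        exact Finset.mem_image.2 ⟨t, ht, hceq.symm⟩

lemma rhs_implies_rel {n : ℕ} [Infinite k] (p : Fin (2 * n + 2) → (Fin (n + 1) → k))
    (hconds : ∀ s : Finset (Fin (2 * n + 2)), s.card = 2 * n + 1 →
      condsOnQuadrics p s = condsOnQuadrics p Finset.univ) :
    ∃ lam : Fin (2 * n + 2) → k, (∀ t, lam t ≠ 0) ∧
      ∀ a b, ∑ t, lam t * (p t a * p t b) = 0 := by
  classical
  haveI hFD : FiniteDimensional k (homogeneousSubmodule (Fin (n + 1)) k 2) :=
    homog2_fd k (Fin (n + 1))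
  have hQT : ∀ i0 : Fin (2 * n + 2),
      quadricsThrough p (Finset.univ.erase i0) = quadricsThrough p Finset.univ := by
    intro i0
    have hcard : (Finset.univ.erase i0).card = 2 * n + 1 := by
      rw [Finset.card_erase_of_mem (Finset.mem_univ i0), Finset.card_univ, Fintype.card_fin]
      omega
    have hc := hconds _ hcard
    have hhom : ∀ s, quadricsThrough p s ≤ homogeneousSubmodule (Fin (n + 1)) k 2 :=
      fun s => inf_le_left
    have hle : quadricsThrough p Finset.univ ≤ quadricsThrough p (Finset.univ.erase i0) := by
      unfold quadricsThrough
      exact le_inf inf_le_left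
        (le_iInf₂ fun i hi => inf_le_right.trans (iInf₂_le i (Finset.mem_univ i)))
    haveI h1 : FiniteDimensional k (quadricsThrough p (Finset.univ.erase i0)) :=
      Submodule.finiteDimensional_of_le (hhom _)
    haveI h2 : FiniteDimensional k (quadricsThrough p Finset.univ) :=
      Submodule.finiteDimensional_of_le (hhom _)
    have hr1 : Module.finrank k (quadricsThrough p (Finset.univ.erase i0)) ≤
        Module.finrank k (homogeneousSubmodule (Fin (n + 1)) k 2) :=
      Submodule.finrank_mono (hhom _)
    have hr2 : Module.finrank k (quadricsThrough p Finset.univ) ≤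
        Module.finrank k (homogeneousSubmodule (Fin (n + 1)) k 2) :=
      Submodule.finrank_mono (hhom _)
    unfold condsOnQuadrics at hc
    have heq : Module.finrank k (quadricsThrough p (Finset.univ.erase i0)) ≤
        Module.finrank k (quadricsThrough p Finset.univ) := by omega
    exact (Submodule.eq_of_le_of_finrank_le hle heq).symm
  have hrel_i : ∀ i0 : Fin (2 * n + 2), ∃ lam : Fin (2 * n + 2) → k, lam i0 ≠ 0 ∧
      ∀ q ∈ homogeneousSubmodule (Fin (n + 1)) k 2, ∑ t, lam t * (aeval (p t) q) = 0 := by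
    intro i0
    set H := homogeneousSubmodule (Fin (n + 1)) k 2 with hH
    let L : {j : Fin (2 * n + 2) // j ≠ i0} → (H →ₗ[k] k) :=
      fun j => ((MvPolynomial.aeval (R := k) (p j.1)).toLinearMap).comp H.subtype
    let K : H →ₗ[k] k := ((MvPolynomial.aeval (R := k) (p i0)).toLinearMap).comp H.subtype
    have hker : (⨅ j, LinearMap.ker (L j)) ≤ LinearMap.ker K := by
      intro x hx
      rw [Submodule.mem_iInf] at hx
      rw [LinearMap.mem_ker]
      have hxmem : (x : MvPolynomial (Fin (n + 1)) k) ∈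
          quadricsThrough p (Finset.univ.erase i0) := by
        rw [mem_quadricsThrough]
        refine ⟨x.2, fun i hi => ?_⟩
        have := hx ⟨i, (Finset.mem_erase.1 hi).1⟩
        rw [LinearMap.mem_ker] at this
        exact this
      rw [hQT i0, mem_quadricsThrough] at hxmem
      exact hxmem.2 i0 (Finset.mem_univ i0)
    have hspan : K ∈ Submodule.span k (Set.range L) := mem_span_of_iInf_ker_le_ker hker
    obtain ⟨c, hc⟩ := (Submodule.mem_span_range_iff_exists_fun k).1 hspan
    refine ⟨fun t => if h : t = i0 then (-1 : k) else c ⟨t, h⟩, by simp, ?_⟩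
    intro q hq
    have hcq : ∑ j : {j : Fin (2 * n + 2) // j ≠ i0}, c j * (aeval (p j.1) q) =
        aeval (p i0) q := by
      have := LinearMap.congr_fun hc ⟨q, hq⟩
      simpa [LinearMap.sum_apply, L, K] using this
    rw [← Finset.sum_erase_add Finset.univ _ (Finset.mem_univ i0)]
    have hsub : ∑ t ∈ Finset.univ.erase i0,
        ((fun t => if h : t = i0 then (-1 : k) else c ⟨t, h⟩) t * (aeval (p t) q)) =
        ∑ j : {j : Fin (2 * n + 2) // j ≠ i0}, c j * (aeval (p j.1) q) := by
      rw [Finset.sum_subtype (p := fun j => j ≠ i0) (Finset.univ.erase i0)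
        (fun x => by simp [Finset.mem_erase])
        (fun t => (if h : t = i0 then (-1 : k) else c ⟨t, h⟩) * (aeval (p t) q))]
      exact Finset.sum_congr rfl fun j _ => by rw [dif_neg j.2]
    rw [hsub, hcq]
    simp
  choose g hg1 hg2 using hrel_i
  have Cadd : ∀ (a b : Fin (2 * n + 2) → k) (c : k),
      (∀ q ∈ homogeneousSubmodule (Fin (n + 1)) k 2, ∑ t, a t * (aeval (p t) q) = 0) →
      (∀ q ∈ homogeneousSubmodule (Fin (n + 1)) k 2, ∑ t, b t * (aeval (p t) q) = 0) →
      (∀ q ∈ homogeneousSubmodule (Fin (n + 1)) k 2,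
        ∑ t, (a t + c * b t) * (aeval (p t) q) = 0) := by
    intro a b c ha hb q hq
    have : ∑ t, (a t + c * b t) * (aeval (p t) q) =
        (∑ t, a t * (aeval (p t) q)) + c * ∑ t, b t * (aeval (p t) q) := by
      rw [Finset.mul_sum, ← Finset.sum_add_distrib]
      exact Finset.sum_congr rfl fun t _ => by ring
    rw [this, ha q hq, hb q hq]
    ring
  obtain ⟨lam, hlam, hClam⟩ := combine_nonzero Cadd g hg1 hg2
  refine ⟨lam, hlam, ?_⟩
  intro a b
  have := hClam (X a * X b) (X_mul_X_mem_homog a b)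
  simpa [_root_.map_mul] using this

end Main

/-- (Eisenbud–Popescu, Thm. 7.1/8.1.)  A nondegenerate set `Γ` of `2n+2` distinct points
in `Pⁿ` is self-associated if and only if every subset of `2n+1` of the points imposes the
same number of conditions on quadrics as `Γ`. -/
theorem stmt_10 (k : Type*) [Field k] [CharZero k] (n : ℕ) (hn : 1 ≤ n)
    (p : Fin (2 * n + 2) → (Fin (n + 1) → k))
    (hnz : ∀ i, p i ≠ 0)
    (hdistinct : ∀ i i', i ≠ i' → ∀ c : k, p i' ≠ c • p i)
    (hnondeg : Submodule.span k (Set.range p) = ⊤) :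
    SelfAssociated p ↔
      ∀ s : Finset (Fin (2 * n + 2)), s.card = 2 * n + 1 →
        condsOnQuadrics p s = condsOnQuadrics p Finset.univ := by
  have hinj : Function.Injective p := by
    intro i i' h
    by_contra hne
    exact hdistinct i i' hne 1 (by rw [one_smul]; exact h.symm)
  constructor
  · intro hSA
    obtain ⟨lam, hlam, hrel⟩ := selfAssociated_rel p hSA
    exact rel_implies_rhs p lam hlam hrel
  · intro hRHS
    obtain ⟨lam, hlam, hrel⟩ := rhs_implies_rel p hRHS
    exact rel_SA p lam hlam hrel hinj hnondeg
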